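/- arXiv:2207.12221 — 5 statements merged into one kernel-verified Lean document; each statement's English description precedes it below -/
import Mathlib

section
/- Let f : 2^E → ℝ≥0 be a polymatroid (monotone, submodular, f(∅)=0) on a finite set E. Then the function f♭ := 2·f(E)·f − f² (i.e., f♭(A) = 2f(E)f(A) − f(A)²) is again a polymatroid: it is nonnegative, monotone, submodular, and f♭(∅)=0. -/
/-- A polymatroid on a finite set `E` (here the whole type `α`) is a function
`f : Finset α → ℝ` that is nonnegative, zero on `∅`, monotone and submodular.
STATEMENT 0: `f♭ A = 2 f(E) f(A) − f(A)²` is again a polymatroid. -/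
theorem flag_polymatroid_is_polymatroid
    {α : Type*} [Fintype α] [DecidableEq α]
    (f : Finset α → ℝ)
    (h0 : f ∅ = 0)
    (hnn : ∀ A : Finset α, 0 ≤ f A)
    (hmono : ∀ A B : Finset α, A ⊆ B → f A ≤ f B)
    (hsub : ∀ A B : Finset α, f (A ∪ B) + f (A ∩ B) ≤ f A + f B) :
    (fun A => 2 * f Finset.univ * f A - (f A) ^ 2) ∅ = 0 ∧
    (∀ A : Finset α, 0 ≤ 2 * f Finset.univ * f A - (f A) ^ 2) ∧
    (∀ A B : Finset α, A ⊆ B →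
      2 * f Finset.univ * f A - (f A) ^ 2 ≤ 2 * f Finset.univ * f B - (f B) ^ 2) ∧
    (∀ A B : Finset α,
      (2 * f Finset.univ * f (A ∪ B) - (f (A ∪ B)) ^ 2) +
        (2 * f Finset.univ * f (A ∩ B) - (f (A ∩ B)) ^ 2) ≤
      (2 * f Finset.univ * f A - (f A) ^ 2) +
        (2 * f Finset.univ * f B - (f B) ^ 2)) := by
  have hM : ∀ A : Finset α, f A ≤ f Finset.univ := fun A =>
    hmono A Finset.univ (Finset.subset_univ A)
  refine ⟨by simp [h0], ?_, ?_, ?_⟩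
  · intro A
    nlinarith [hnn A, hM A]
  · intro A B hAB
    nlinarith [hnn A, hnn B, hM A, hM B, hmono A B hAB,
      mul_nonneg (sub_nonneg.2 (hmono A B hAB))
        (sub_nonneg.2 (add_le_add (hM A) (hM B)))]
  · intro A B
    have h1 : f (A ∩ B) ≤ f A := hmono _ _ Finset.inter_subset_left
    have h2 : f (A ∩ B) ≤ f B := hmono _ _ Finset.inter_subset_right
    have h3 : f A ≤ f (A ∪ B) := hmono _ _ Finset.subset_union_left
    have h4 : f B ≤ f (A ∪ B) := hmono _ _ Finset.subset_union_right
    have hs := hsub A B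
    nlinarith [hnn (A ∩ B), hM (A ∪ B), hM A, hM B,
      mul_nonneg (sub_nonneg.2 h1) (sub_nonneg.2 h3),
      mul_nonneg (sub_nonneg.2 (show f (A ∪ B) + f (A ∩ B) - f A ≤ f B by linarith))
        (sub_nonneg.2 (show f B + (f (A ∪ B) + f (A ∩ B) - f A) ≤ 2 * f Finset.univ by
          have := hM B; have := hM (A ∪ B); linarith))]
end

section
/- Let f : 2^{[n]} → ℝ≥0 be a polymatroid and suppose that for all flats A, B, C of f with B covering A in the lattice of flats, we have f(B) ≤ f(C) or f(C) ≤ f(A). Then for any two maximal chains of flats A₀ ⋖ A₁ ⋖ ⋯ ⋖ A_k and A'₀ ⋖ A'₁ ⋖ ⋯ ⋖ A'_l, one has k = l and f(A_i) = f(A'_i) for all i. -/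
/-- A set `F` is a flat of `f` if adding any element strictly increases `f`. -/
def IsPolyFlat {n : ℕ} (f : Finset (Fin n) → ℝ) (F : Finset (Fin n)) : Prop :=
  ∀ e ∉ F, f F < f (insert e F)

/-- `B` covers `A` in the lattice of flats of `f`. -/
def FlatCovers {n : ℕ} (f : Finset (Fin n) → ℝ) (A B : Finset (Fin n)) : Prop :=
  IsPolyFlat f A ∧ IsPolyFlat f B ∧ A ⊂ B ∧
    ∀ C : Finset (Fin n), IsPolyFlat f C → A ⊂ C → ¬ C ⊂ B

/-- A maximal chain of flats `A 0 ⋖ A 1 ⋖ ⋯ ⋖ A k`: every member is a flat,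
consecutive members are covers, `A 0` is the minimal flat (contained in every
flat) and `A k = E`. -/
def MaxFlatChain {n : ℕ} (f : Finset (Fin n) → ℝ) (A : ℕ → Finset (Fin n))
    (k : ℕ) : Prop :=
  (∀ i ≤ k, IsPolyFlat f (A i)) ∧
  (∀ i < k, FlatCovers f (A i) (A (i + 1))) ∧
  (∀ F : Finset (Fin n), IsPolyFlat f F → A 0 ⊆ F) ∧
  A k = Finset.univ

/-- under the stated condition on flats `A ⋖ B` and `C`, any two
maximal chains of flats have the same length and the same `f`-values. -/
theorem maximal_chains_same_values
    {n : ℕ} (f : Finset (Fin n) → ℝ)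
    (h0 : f ∅ = 0)
    (hnn : ∀ A : Finset (Fin n), 0 ≤ f A)
    (hmono : ∀ A B : Finset (Fin n), A ⊆ B → f A ≤ f B)
    (hsub : ∀ A B : Finset (Fin n), f (A ∪ B) + f (A ∩ B) ≤ f A + f B)
    (hcond : ∀ A B C : Finset (Fin n), IsPolyFlat f A → IsPolyFlat f B →
      IsPolyFlat f C → FlatCovers f A B → f B ≤ f C ∨ f C ≤ f A)
    (A A' : ℕ → Finset (Fin n)) (k l : ℕ)
    (hA : MaxFlatChain f A k) (hA' : MaxFlatChain f A' l) :
    k = l ∧ ∀ i ≤ k, f (A i) = f (A' i) := by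
  obtain ⟨hAflat, hAcov, hAmin, hAtop⟩ := hA
  obtain ⟨hA'flat, hA'cov, hA'min, hA'top⟩ := hA'
  have hstrict : ∀ (F B : Finset (Fin n)), IsPolyFlat f F → F ⊂ B → f F < f B := by
    intro F B hF hFB
    obtain ⟨e, heB, heF⟩ := Finset.exists_of_ssubset hFB
    exact lt_of_lt_of_le (hF e heF) (hmono _ _ (Finset.insert_subset heB hFB.subset))
  have h00 : A 0 = A' 0 :=
    Finset.Subset.antisymm (hAmin _ (hA'flat 0 (Nat.zero_le _)))
      (hA'min _ (hAflat 0 (Nat.zero_le _)))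
  have key : ∀ i, i ≤ k → i ≤ l → f (A i) = f (A' i) := by
    intro i
    induction i with
    | zero => intro _ _; rw [h00]
    | succ i ih =>
      intro hik hil
      have hik' : i ≤ k := Nat.le_of_succ_le hik
      have hil' : i ≤ l := Nat.le_of_succ_le hil
      have heq := ih hik' hil'
      have hc1 := hAcov i hik
      have hc2 := hA'cov i hil
      have hs1 : f (A i) < f (A (i+1)) := hstrict _ _ (hAflat i hik') hc1.2.2.1
      have hs2 : f (A' i) < f (A' (i+1)) := hstrict _ _ (hA'flat i hil') hc2.2.2.1
      have h1 := hcond (A i) (A (i+1)) (A' (i+1)) (hAflat i hik') (hAflat (i+1) hik)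
        (hA'flat (i+1) hil) hc1
      have h2 := hcond (A' i) (A' (i+1)) (A (i+1)) (hA'flat i hil') (hA'flat (i+1) hil)
        (hAflat (i+1) hik) hc2
      rcases h1 with h1 | h1
      · rcases h2 with h2 | h2
        · linarith
        · linarith
      · linarith
  have hkl : k = l := by
    by_contra hne
    rcases Nat.lt_or_ge k l with hlt | hge
    · have h1 := key k le_rfl hlt.le
      have hc := hA'cov k hlt
      have hs : f (A' k) < f (A' (k+1)) := hstrict _ _ (hA'flat k hlt.le) hc.2.2.1
      have hle : f (A' (k+1)) ≤ f (A k) := by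
        rw [hAtop]; exact hmono _ _ (Finset.subset_univ _)
      linarith
    · have hlt : l < k := lt_of_le_of_ne hge (Ne.symm hne)
      have h1 := key l hlt.le le_rfl
      have hc := hAcov l hlt
      have hs : f (A l) < f (A (l+1)) := hstrict _ _ (hAflat l hlt.le) hc.2.2.1
      have hle : f (A (l+1)) ≤ f (A' l) := by
        rw [hA'top]; exact hmono _ _ (Finset.subset_univ _)
      linarith
  exact ⟨hkl, fun i hi => key i hi (hkl ▸ hi)⟩
end

section
/- Let M = (E, ℐ) be a matroid of rank r, and let I, J ∈ ℐ be independent sets with |I| = k and |J| = k+1 (consecutive sizes in a rank vector). Then [e_I, e_J] is an edge of the polytope conv{e_K : K ∈ ℐ, |K| ∈ {k, k+1}} if and only if I ⊂ J. -/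
open Finset

set_option linter.unusedSectionVars false
set_option linter.unusedVariables false

private lemma dot_char {α : Type*} [Fintype α] [DecidableEq α] (c : α → ℝ) (K : Finset α) :
    ∑ a, c a * (if a ∈ K then (1:ℝ) else 0) = ∑ a ∈ K, c a := by
  simp [mul_ite, Finset.sum_ite_mem]

section aux
variable {α : Type*} [Fintype α] [DecidableEq α] {I J : Finset α} {k : ℕ}

private def cw (I J : Finset α) : α → ℝ :=
  fun a => if a ∈ I then 1 else if a ∈ J then 0 else -1

private lemma cw_le (a : α) : cw I J a ≤ (if a ∈ I then (1:ℝ) else 0) := by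
  unfold cw
  by_cases h1 : a ∈ I <;> by_cases h2 : a ∈ J <;> simp [h1, h2]

private lemma sum_cw_le (K : Finset α) (hIc : I.card = k) :
    ∑ a ∈ K, cw I J a ≤ (k : ℝ) := by
  calc ∑ a ∈ K, cw I J a ≤ ∑ a ∈ K, (if a ∈ I then (1:ℝ) else 0) :=
        Finset.sum_le_sum fun a _ => cw_le a
    _ = ((K ∩ I).card : ℝ) := by simp [Finset.sum_ite_mem]
    _ ≤ (k : ℝ) := by
        exact_mod_cast hIc ▸ Finset.card_le_card (Finset.inter_subset_right)

private lemma sum_cw_I (hIc : I.card = k) : ∑ a ∈ I, cw I J a = (k : ℝ) := by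
  rw [Finset.sum_congr rfl (fun a ha => show cw I J a = 1 by simp [cw, ha])]
  simp [hIc]

private lemma sum_cw_J (hIJ : I ⊆ J) (hIc : I.card = k) : ∑ a ∈ J, cw I J a = (k : ℝ) := by
  rw [← Finset.sum_sdiff hIJ, sum_cw_I hIc,
    Finset.sum_congr rfl (fun a ha => show cw I J a = 0 by
      rcases Finset.mem_sdiff.1 ha with ⟨h1, h2⟩
      simp [cw, h1, h2])]
  simp

private lemma sum_cw_eq (hIJ : I ⊆ J) (hIc : I.card = k) (hJc : J.card = k + 1)
    (K : Finset α) (hKc : K.card = k ∨ K.card = k + 1)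
    (h : ∑ a ∈ K, cw I J a = (k : ℝ)) : K = I ∨ K = J := by
  have h1 : ∑ a ∈ K, ((if a ∈ I then (1:ℝ) else 0) - cw I J a) = ((K ∩ I).card : ℝ) - k := by
    rw [Finset.sum_sub_distrib, h]; simp [Finset.sum_ite_mem]
  have h2 : ((K ∩ I).card : ℝ) ≤ (k:ℝ) := by
    exact_mod_cast hIc ▸ Finset.card_le_card (Finset.inter_subset_right)
  have hnn : ∀ a ∈ K, 0 ≤ (if a ∈ I then (1:ℝ) else 0) - cw I J a :=
    fun a _ => sub_nonneg.2 (cw_le a)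
  have h3 : ∑ a ∈ K, ((if a ∈ I then (1:ℝ) else 0) - cw I J a) = 0 := by
    have h4 := Finset.sum_nonneg hnn
    linarith
  have h5 : ((K ∩ I).card : ℝ) = (k:ℝ) := by linarith
  have hKI : (K ∩ I).card = k := by exact_mod_cast h5
  have hIK : I ⊆ K := by
    have : K ∩ I = I := Finset.eq_of_subset_of_card_le Finset.inter_subset_right (by omega)
    rw [← this]; exact Finset.inter_subset_left
  have hKJ : K ⊆ J := by
    intro a ha
    by_contra haJ
    have haI : a ∉ I := fun h => haJ (hIJ h)
    have := (Finset.sum_eq_zero_iff_of_nonneg hnn).1 h3 a ha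
    simp [cw, haI, haJ] at this
  rcases hKc with hc | hc
  · exact Or.inl (Finset.eq_of_subset_of_card_le hIK (by omega)).symm
  · exact Or.inr (Finset.eq_of_subset_of_card_le hKJ (by omega))
end aux

private lemma lin_dot {α : Type*} [Fintype α] (c : α → ℝ) :
    IsLinearMap ℝ (fun x : α → ℝ => ∑ a, c a * x a) := by
  constructor
  · intro x y; simp [mul_add, Finset.sum_add_distrib]
  · intro r x; rw [smul_eq_mul, Finset.mul_sum]
    exact Finset.sum_congr rfl fun a _ => by simp [smul_eq_mul]; ring

private lemma maximizer_hull {α : Type*} [Fintype α] (S : Set (α → ℝ)) (c : α → ℝ) (M : ℝ)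
    (u v : α → ℝ) (hu : u ∈ S) (hv : v ∈ S)
    (hfu : ∑ a, c a * u a = M) (hfv : ∑ a, c a * v a = M)
    (hle : ∀ x ∈ S, ∑ a, c a * x a ≤ M)
    (heq : ∀ x ∈ S, ∑ a, c a * x a = M → x = u ∨ x = v) :
    {x | x ∈ convexHull ℝ S ∧ ∀ y ∈ convexHull ℝ S, ∑ a, c a * y a ≤ ∑ a, c a * x a}
      = segment ℝ u v := by
  classical
  set F : (α → ℝ) →ₗ[ℝ] ℝ := IsLinearMap.mk' _ (lin_dot c) with hF
  have hFdef : ∀ x, F x = ∑ a, c a * x a := fun x => rfl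
  have hP : ∀ x ∈ convexHull ℝ S, F x ≤ M := by
    intro x hx
    exact convexHull_min (fun y hy => hle y hy) (convex_halfSpace_le (lin_dot c) M) hx
  ext x
  constructor
  · rintro ⟨hx, hmax⟩
    have hxM : F x = M :=
      le_antisymm (hP x hx) (hfu ▸ hmax u (subset_convexHull ℝ S hu))
    rw [_root_.convexHull_eq] at hx
    obtain ⟨ι, t, w, z, hw0, hw1, hzS, hcm⟩ := hx
    have hcm' : ∑ i ∈ t, w i • z i = x := by
      rw [← Finset.centerMass_eq_of_sum_1 _ _ hw1]; exact hcm
    have hFx : ∑ i ∈ t, w i * F (z i) = M := by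
      have : F (∑ i ∈ t, w i • z i) = ∑ i ∈ t, w i * F (z i) := by
        rw [map_sum]; exact Finset.sum_congr rfl fun i _ => by rw [map_smul, smul_eq_mul]
      rw [hcm'] at this; rw [← this, hxM]
    have hz0 : ∑ i ∈ t, w i * (M - F (z i)) = 0 := by
      have : ∑ i ∈ t, w i * (M - F (z i))
          = M * ∑ i ∈ t, w i - ∑ i ∈ t, w i * F (z i) := by
        rw [Finset.mul_sum, ← Finset.sum_sub_distrib]
        exact Finset.sum_congr rfl fun i _ => by ring
      rw [this, hw1, hFx]; ring
    have hnn : ∀ i ∈ t, 0 ≤ w i * (M - F (z i)) := fun i hi =>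
      mul_nonneg (hw0 i hi) (sub_nonneg.2 (hle _ (hzS i hi)))
    have hkey : ∀ i ∈ t, w i ≠ 0 → z i ∈ ({u, v} : Set (α → ℝ)) := by
      intro i hi hwi
      have h0 := (Finset.sum_eq_zero_iff_of_nonneg hnn).1 hz0 i hi
      have hFz : F (z i) = M := by
        rcases mul_eq_zero.1 h0 with h | h
        · exact absurd h hwi
        · linarith
      rcases heq _ (hzS i hi) hFz with h | h <;> simp [h]
    have hxseg : x ∈ convexHull ℝ ({u, v} : Set (α → ℝ)) := by
      rw [← hcm, ← Finset.centerMass_filter_ne_zero]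
      refine Finset.centerMass_mem_convexHull _ (fun i hi => hw0 i (Finset.mem_filter.1 hi).1)
        ?_ (fun i hi => hkey i (Finset.mem_filter.1 hi).1 (Finset.mem_filter.1 hi).2)
      rw [Finset.sum_filter_ne_zero, hw1]; norm_num
    rwa [convexHull_pair] at hxseg
  · intro hx
    rw [← convexHull_pair] at hx
    have hxP : x ∈ convexHull ℝ S := convexHull_mono (Set.pair_subset hu hv) hx
    rw [convexHull_pair] at hx
    obtain ⟨a, b, ha, hb, hab, rfl⟩ := hx
    refine ⟨hxP, fun y hy => ?_⟩
    have : F (a • u + b • v) = M := by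
      rw [map_add, map_smul, map_smul, smul_eq_mul, smul_eq_mul, hFdef, hFdef, hfu, hfv]
      linear_combination M * hab
    calc ∑ a, c a * y a ≤ M := hP y hy
      _ = ∑ a', c a' * (a • u + b • v) a' := by rw [← hFdef, this]

/-- The segment `[u,v]` is a face of `P` (the maximizer set of some linear
functional on `P` is exactly `[u,v]`). -/
def IsEdgeSeg {α : Type*} [Fintype α] (P : Set (α → ℝ)) (u v : α → ℝ) : Prop :=
  u ≠ v ∧ ∃ c : α → ℝ,
    {x | x ∈ P ∧ ∀ y ∈ P, ∑ a, c a * y a ≤ ∑ a, c a * x a} = segment ℝ u v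

/-- for a matroid with independent sets `Ind`, and `I, J`
independent with `|I| = k`, `|J| = k+1`, the segment `[e_I, e_J]` is an edge of
the rank-selected independence polytope `conv{e_K : K ∈ ℐ, |K| ∈ {k, k+1}}`
iff `I ⊂ J`. -/
theorem rank_selected_edge_iff
    {α : Type*} [Fintype α] [DecidableEq α]
    (Ind : Finset α → Prop)
    (hempty : Ind ∅)
    (hhered : ∀ I J : Finset α, J ⊆ I → Ind I → Ind J)
    (haug : ∀ I J : Finset α, Ind I → Ind J → I.card < J.card →
      ∃ e ∈ J \ I, Ind (insert e I))
    (k : ℕ) (I J : Finset α)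
    (hI : Ind I) (hJ : Ind J) (hIc : I.card = k) (hJc : J.card = k + 1) :
    IsEdgeSeg
      (convexHull ℝ {x : α → ℝ | ∃ K : Finset α, Ind K ∧
        (K.card = k ∨ K.card = k + 1) ∧ x = fun a => if a ∈ K then 1 else 0})
      (fun a => if a ∈ I then 1 else 0) (fun a => if a ∈ J then 1 else 0) ↔
    I ⊂ J := by
  classical
  set S : Set (α → ℝ) := {x : α → ℝ | ∃ K : Finset α, Ind K ∧
      (K.card = k ∨ K.card = k + 1) ∧ x = fun a => if a ∈ K then 1 else 0} with hS
  set u : α → ℝ := fun a => if a ∈ I then 1 else 0 with hu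
  set v : α → ℝ := fun a => if a ∈ J then 1 else 0 with hv
  constructor
  · -- edge → I ⊂ J
    rintro ⟨hne, c, hset⟩
    have hsub : I ⊆ J := by
      by_contra hns
      obtain ⟨e, heJI, hIe⟩ := haug I J hI hJ (by omega)
      rw [Finset.mem_sdiff] at heJI
      obtain ⟨heJ, heI⟩ := heJI
      set u' : α → ℝ := fun a => if a ∈ insert e I then 1 else 0 with hu'
      set v' : α → ℝ := fun a => if a ∈ J.erase e then 1 else 0 with hv'
      have hu'P : u' ∈ convexHull ℝ S := subset_convexHull ℝ S
        ⟨insert e I, hIe, Or.inr (by rw [Finset.card_insert_of_notMem heI]; omega), rfl⟩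
      have hv'P : v' ∈ convexHull ℝ S := subset_convexHull ℝ S
        ⟨J.erase e, hhered _ _ (Finset.erase_subset _ _) hJ,
          Or.inl (by rw [Finset.card_erase_of_mem heJ]; omega), rfl⟩
      set m : α → ℝ := (1/2 : ℝ) • u + (1/2 : ℝ) • v with hm
      have hmseg : m ∈ segment ℝ u v := ⟨1/2, 1/2, by norm_num, by norm_num, by norm_num, rfl⟩
      have hmmem := hset ▸ hmseg
      obtain ⟨hmP, hmmax⟩ := hmmem
      have humem := hset ▸ (left_mem_segment ℝ u v)
      obtain ⟨huP, humax⟩ := humem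
      have hvmem := hset ▸ (right_mem_segment ℝ u v)
      obtain ⟨hvP, hvmax⟩ := hvmem
      -- key pointwise identity
      have hkey : ∀ a, u a + v a = u' a + v' a := by
        intro a
        by_cases hae : a = e
        · subst hae; simp [hu, hv, hu', hv', heI, heJ]
        · simp [hu, hv, hu', hv', Finset.mem_insert, Finset.mem_erase, hae]
      have hsum : (∑ a, c a * u a) + (∑ a, c a * v a)
          = (∑ a, c a * u' a) + (∑ a, c a * v' a) := by
        rw [← Finset.sum_add_distrib, ← Finset.sum_add_distrib]
        exact Finset.sum_congr rfl fun a _ => by rw [← mul_add, ← mul_add, hkey a]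
      have hfum : ∑ a, c a * u a = ∑ a, c a * m a :=
        le_antisymm (hmmax u huP) (humax m hmP)
      have hfvm : ∑ a, c a * v a = ∑ a, c a * m a :=
        le_antisymm (hmmax v hvP) (hvmax m hmP)
      have h1 : ∑ a, c a * u' a ≤ ∑ a, c a * m a := hmmax u' hu'P
      have h2 : ∑ a, c a * v' a ≤ ∑ a, c a * m a := hmmax v' hv'P
      have hfu' : ∑ a, c a * u' a = ∑ a, c a * m a := by linarith
      have hu'mem : u' ∈ segment ℝ u v := by
        rw [← hset]
        exact ⟨hu'P, fun y hy => (hmmax y hy).trans (le_of_eq hfu'.symm)⟩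
      obtain ⟨a, b, ha, hb, hab, habe⟩ := hu'mem
      have hbe := congrFun habe e
      simp only [Pi.add_apply, Pi.smul_apply, smul_eq_mul, hu, hv, hu'] at hbe
      rw [if_neg heI, if_pos heJ, if_pos (Finset.mem_insert_self e I)] at hbe
      have hb1 : b = 1 := by linarith
      have ha0 : a = 0 := by linarith
      have hvu' : v = u' := by
        funext x
        have := congrFun habe x
        simp only [Pi.add_apply, Pi.smul_apply, smul_eq_mul, ha0, hb1] at this
        linarith [this]
      have hJI : J = insert e I := by
        ext x
        have hx := congrFun hvu' x
        simp only [hu', hv] at hx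
        by_cases h1 : x ∈ J <;> by_cases h2 : x ∈ insert e I <;>
          simp [h1, h2] at hx ⊢
      exact hns (fun x hxI => hJI ▸ Finset.mem_insert_of_mem hxI)
    exact hsub.ssubset_of_ne (by intro h; rw [h] at hIc; omega)
  · -- I ⊂ J → edge
    intro hIJ
    have hsub : I ⊆ J := hIJ.subset
    obtain ⟨e, heJ, heI⟩ := Finset.exists_of_ssubset hIJ
    constructor
    · intro h
      have := congrFun h e
      rw [hu, hv] at this
      simp [heI, heJ] at this
    · refine ⟨cw I J, ?_⟩
      have hres := maximizer_hull S (cw I J) (k : ℝ) u v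
        ⟨I, hI, Or.inl hIc, rfl⟩ ⟨J, hJ, Or.inr hJc, rfl⟩
        (by rw [hu, dot_char]; exact sum_cw_I hIc)
        (by rw [hv, dot_char]; exact sum_cw_J hsub hIc)
        (by rintro x ⟨K, hK, hKc, rfl⟩; rw [dot_char]; exact sum_cw_le K hIc)
        (by rintro x ⟨K, hK, hKc, rfl⟩ hx
            rw [dot_char] at hx
            rcases sum_cw_eq hsub hIc hJc K hKc hx with h | h
            · exact Or.inl (by rw [h])
            · exact Or.inr (by rw [h]))
      exact hres
end

section
/- Let 1 ≤ k < n and S = {1,…,k}. The 𝟙_S-monotone paths on the permutohedron Π_{n−1} starting at the identity permutation (1,2,…,n) are in bijection with rectangular lattice permutations of size k × (n−k): sequences a₁,…,a_{k(n−k)} ∈ [k] in which each j ∈ [k] occurs exactly n−k times and, for every prefix, the number of occurrences of i is at least the number of occurrences of i+1 for each i. In particular, every such monotone path has length exactly k(n−k) and ends at the permutation (n−k+1,…,n,1,…,n−k). -/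
/-- A vertex of the permutohedron `Π_{n−1}`: a permutation of `(1,2,…,n)`. -/
def IsPermVertex (n : ℕ) (x : Fin n → ℝ) : Prop :=
  ∃ σ : Equiv.Perm (Fin n), ∀ i, x i = ((σ i : ℕ) : ℝ) + 1

/-- The permutohedron `Π_{n−1} ⊂ ℝⁿ`. -/
def Permutohedron (n : ℕ) : Set (Fin n → ℝ) :=
  convexHull ℝ {x | IsPermVertex n x}

/-- `[u,v]` is an edge of `P`: a face that is the segment between the two
distinct points `u` and `v`. -/
def IsEdgeOf {n : ℕ} (P : Set (Fin n → ℝ)) (u v : Fin n → ℝ) : Prop :=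
  u ≠ v ∧ ∃ c : Fin n → ℝ,
    {x | x ∈ P ∧ ∀ y ∈ P, ∑ i, c i * y i ≤ ∑ i, c i * x i} = segment ℝ u v

/-- `𝟙_S(x)` for `S = {1,…,k}` (the first `k` coordinates). -/
def sumFirst (n k : ℕ) (x : Fin n → ℝ) : ℝ :=
  ∑ i ∈ Finset.univ.filter (fun i : Fin n => (i : ℕ) < k), x i

/-- A `𝟙_S`-monotone path on `Π_{n−1}` starting at the identity permutation
`(1,2,…,n)`, for `S = {1,…,k}`: a sequence of vertices joined by edges along
which `𝟙_S` strictly increases, ending at a `𝟙_S`-maximizing vertex. -/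
structure MonotonePathPerm (n k : ℕ) where
  M : ℕ
  σ : ℕ → (Fin n → ℝ)
  start : σ 0 = fun i : Fin n => ((i : ℕ) : ℝ) + 1
  vert : ∀ h ≤ M, IsPermVertex n (σ h)
  edge : ∀ h < M, IsEdgeOf (Permutohedron n) (σ h) (σ (h + 1))
  inc : ∀ h < M, sumFirst n k (σ h) < sumFirst n k (σ (h + 1))
  max' : ∀ x : Fin n → ℝ, IsPermVertex n x → sumFirst n k x ≤ sumFirst n k (σ M)
  tail : ∀ h, M ≤ h → σ h = σ M

/-- A rectangular lattice permutation of size `k × m`: a sequence of `k·m`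
values in `{0,…,k−1}` (representing `[k]`) in which each value occurs exactly
`m` times and, in every prefix, value `i` occurs at least as often as `i+1`. -/
structure LatticePerm (k m : ℕ) where
  a : Fin (k * m) → Fin k
  count : ∀ j : Fin k,
    (Finset.univ.filter (fun t : Fin (k * m) => a t = j)).card = m
  prefix' : ∀ p : ℕ, ∀ i : ℕ, i + 1 < k →
    (Finset.univ.filter (fun t : Fin (k * m) => (t : ℕ) < p ∧ (a t : ℕ) = i + 1)).card ≤
    (Finset.univ.filter (fun t : Fin (k * m) => (t : ℕ) < p ∧ (a t : ℕ) = i)).card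

/-!
An edge of the permutohedron is the face on which some linear functional `c` is maximal. By the
rearrangement inequality the vertices on it are the permutations monovarying with `c`, and there
are only two of them when `c` ties exactly two positions, which then carry consecutive values.
So the edges are the swaps `σ ↦ σ * swap a b` with `σ b = σ a + 1`, and along a `𝟙_S`-monotone
edge the position `a` lies in `S = {0, …, k - 1}` and `b` outside, so `𝟙_S` grows by exactly
one. Such a swap never changes the relative order of two positions on the same side of `S`; both
blocks therefore stay increasing, and the value at `q ∈ S` is `q` plus the number of steps made
at `q`. That `S` stays increasing is precisely the lattice condition for the word recording
these positions (position `q` read as letter `k - 1 - q`), and maximality of `𝟙_S` at the end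
forces the endpoint, hence `n - k` steps at each position. Conversely a lattice word prescribes
at every step which position of `S` to raise, and the lattice condition guarantees that the
next larger value lies outside `S`.
-/

open Finset Equiv

section Permutohedron

variable {n : ℕ}

def permVec (σ : Perm (Fin n)) : Fin n → ℝ := fun i => ((σ i : ℕ) : ℝ) + 1

lemma permVec_injective : Function.Injective (permVec (n := n)) := by
  intro σ τ h
  ext i
  simpa [permVec] using congrFun h i

lemma permVec_lt_permVec (σ : Perm (Fin n)) {i j : Fin n} :
    permVec σ i < permVec σ j ↔ σ i < σ j := by
  simp only [permVec, add_lt_add_iff_right, Nat.cast_lt, Fin.val_fin_lt]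

lemma permVec_eq_comp (α x : Perm (Fin n)) : permVec x = permVec α ∘ ⇑(α⁻¹ * x) :=
  (congrArg permVec (mul_inv_cancel_left α x)).symm

lemma isPermVertex_iff {x : Fin n → ℝ} : IsPermVertex n x ↔ x ∈ Set.range permVec :=
  ⟨fun ⟨σ, h⟩ => ⟨σ, (funext h).symm⟩, fun ⟨σ, h⟩ => ⟨σ, fun i => (congrFun h i).symm⟩⟩

lemma permutohedron_eq_convexHull :
    Permutohedron n = convexHull ℝ ↑(univ.image (permVec (n := n))) := by
  rw [Permutohedron, coe_image, coe_univ, Set.image_univ]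
  congr 1
  ext x
  exact isPermVertex_iff

lemma permVec_mem_permutohedron (σ : Perm (Fin n)) : permVec σ ∈ Permutohedron n :=
  subset_convexHull ℝ _ (isPermVertex_iff.2 ⟨σ, rfl⟩)

lemma dotProduct_comp_swap {ι : Type*} [Fintype ι] [DecidableEq ι] (c v : ι → ℝ) (a b : ι) :
    c ⬝ᵥ (v ∘ swap a b) = c ⬝ᵥ v + (c a - c b) * (v b - v a) := by
  have hpt : ∀ i, c i * v (swap a b i) = c i * v i + (if i = a then c a * (v b - v a) else 0)
      + (if i = b then c b * (v a - v b) else 0) := by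
    intro i
    rcases eq_or_ne i a with rfl | hia
    · rcases eq_or_ne i b with rfl | hib
      · simp
      · simp [hib]; ring
    · rcases eq_or_ne i b with rfl | hib
      · simp [hia]; ring
      · simp [hia, hib, swap_apply_of_ne_of_ne hia hib]
  simp only [dotProduct, Function.comp_apply, hpt, sum_add_distrib, sum_ite_eq', mem_univ,
    if_true]
  ring

lemma dotProduct_permVec_mul_swap (c : Fin n → ℝ) (σ : Perm (Fin n)) (a b : Fin n) :
    c ⬝ᵥ permVec (σ * swap a b) =
      c ⬝ᵥ permVec σ + (c a - c b) * (permVec σ b - permVec σ a) :=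
  dotProduct_comp_swap c (permVec σ) a b

lemma monovary_of_forall_dotProduct_le {c : Fin n → ℝ} {α : Perm (Fin n)}
    (hmax : ∀ x, c ⬝ᵥ permVec x ≤ c ⬝ᵥ permVec α) : Monovary c (permVec α) := by
  intro i j hij
  by_contra! hc
  have := hmax (α * swap i j)
  rw [dotProduct_permVec_mul_swap] at this
  nlinarith

lemma Monovary.dotProduct_permVec_le {c : Fin n → ℝ} {α : Perm (Fin n)}
    (hα : Monovary c (permVec α)) (x : Perm (Fin n)) : c ⬝ᵥ permVec x ≤ c ⬝ᵥ permVec α := by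
  rw [permVec_eq_comp α x]
  exact hα.sum_mul_comp_perm_le_sum_mul

lemma Monovary.monovary_permVec_iff {c : Fin n → ℝ} {α : Perm (Fin n)}
    (hα : Monovary c (permVec α)) (x : Perm (Fin n)) :
    Monovary c (permVec x) ↔ c ⬝ᵥ permVec x = c ⬝ᵥ permVec α := by
  rw [permVec_eq_comp α x]
  exact hα.sum_mul_comp_perm_eq_sum_mul_iff.symm

lemma Equiv.Perm.card_filter_apply_lt (σ : Perm (Fin n)) (i : Fin n) :
    #{j | σ j < σ i} = σ i := by
  rw [← Fin.card_Iio]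
  exact card_equiv σ (by simp)

lemma Equiv.Perm.apply_eq_of_lt_iff {σ τ : Perm (Fin n)} {i : Fin n}
    (h : ∀ j, σ j < σ i ↔ τ j < τ i) : σ i = τ i := by
  apply Fin.ext
  rw [← σ.card_filter_apply_lt, ← τ.card_filter_apply_lt]
  simp only [h]

lemma Monovary.lt_iff_of_permVec {c : Fin n → ℝ} {x : Perm (Fin n)}
    (hx : Monovary c (permVec x)) {i j : Fin n} (hc : c j ≠ c i) : x j < x i ↔ c j < c i := by
  refine ⟨fun h => (hx ((permVec_lt_permVec x).2 h)).lt_of_ne hc, fun h => ?_⟩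
  by_contra! hle
  have hne : j ≠ i := fun hji => hc (hji ▸ rfl)
  exact h.not_ge (hx ((permVec_lt_permVec x).2 (hle.lt_of_ne (x.injective.ne hne.symm))))

lemma Monovary.apply_eq_of_permVec {c : Fin n → ℝ} {x y : Perm (Fin n)}
    (hx : Monovary c (permVec x)) (hy : Monovary c (permVec y)) {i : Fin n}
    (hi : ∀ j ≠ i, c j ≠ c i) : x i = y i := by
  refine Equiv.Perm.apply_eq_of_lt_iff fun j => ?_
  rcases eq_or_ne j i with rfl | hj
  · simp
  · rw [hx.lt_iff_of_permVec (hi j hj), hy.lt_iff_of_permVec (hi j hj)]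

lemma dotProduct_permVec_lt_self {γ x : Perm (Fin n)} (hne : x ≠ γ) :
    permVec γ ⬝ᵥ permVec x < permVec γ ⬝ᵥ permVec γ := by
  set v := permVec γ - permVec x
  have hv : 0 < v ⬝ᵥ v := by
    refine lt_of_le_of_ne (sum_nonneg fun i _ => mul_self_nonneg (v i)) (Ne.symm ?_)
    rw [Ne, dotProduct_self_eq_zero, sub_eq_zero]
    exact fun h => hne (permVec_injective h).symm
  have hxx : permVec x ⬝ᵥ permVec x = permVec γ ⬝ᵥ permVec γ := by
    rw [permVec_eq_comp γ x, comp_equiv_dotProduct_comp_equiv]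
  have hvv : v ⬝ᵥ v =
      permVec γ ⬝ᵥ permVec γ - 2 * permVec γ ⬝ᵥ permVec x + permVec x ⬝ᵥ permVec x := by
    simp only [v, sub_dotProduct, dotProduct_sub, dotProduct_comm (permVec x) (permVec γ)]
    ring
  linarith

lemma eq_or_eq_of_permVec_mem_segment {α β γ : Perm (Fin n)}
    (h : permVec γ ∈ segment ℝ (permVec α) (permVec β)) : γ = α ∨ γ = β := by
  by_contra! hne
  obtain ⟨s, t, hs, ht, hst, hγ⟩ := h
  have hα := dotProduct_permVec_lt_self hne.1.symm
  have hβ := dotProduct_permVec_lt_self hne.2.symm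
  have hcomb : permVec γ ⬝ᵥ permVec γ =
      s * permVec γ ⬝ᵥ permVec α + t * permVec γ ⬝ᵥ permVec β := by
    simpa [dotProduct_add, dotProduct_smul] using (congrArg (permVec γ ⬝ᵥ ·) hγ).symm
  have hsplit : permVec γ ⬝ᵥ permVec γ =
      s * permVec γ ⬝ᵥ permVec γ + t * permVec γ ⬝ᵥ permVec γ := by
    rw [← add_mul, hst, one_mul]
  have hβ' := mul_nonneg ht (sub_nonneg.2 hβ.le)
  rcases hs.eq_or_lt with rfl | hs
  · obtain rfl : t = 1 := by linarith
    linarith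
  · nlinarith [mul_pos hs (sub_pos.2 hα)]

lemma setOf_isMaxOn_convexHull_eq {E : Type*} [AddCommGroup E] [Module ℝ E] {f : E → ℝ}
    (hf : IsLinearMap ℝ f) {s : Finset E} {y₀ : E} (hy₀ : y₀ ∈ s) (hmax : ∀ y ∈ s, f y ≤ f y₀) :
    {x | x ∈ convexHull ℝ (s : Set E) ∧ ∀ y ∈ convexHull ℝ (s : Set E), f y ≤ f x} =
      convexHull ℝ ↑{y ∈ s | f y = f y₀} := by
  have hle : convexHull ℝ (s : Set E) ⊆ {x | f x ≤ f y₀} :=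
    convexHull_min (fun y hy => hmax y hy) (convex_halfSpace_le hf _)
  ext x
  constructor
  · rintro ⟨hx, hxmax⟩
    have hfx : f x = f y₀ := le_antisymm (hle hx) (hxmax y₀ (subset_convexHull ℝ _ hy₀))
    obtain ⟨w, hw0, hw1, rfl⟩ := Finset.mem_convexHull'.1 hx
    have hfsum : f (∑ y ∈ s, w y • y) = ∑ y ∈ s, w y * f y := by
      have := map_sum (hf.mk' f) (fun y => w y • y) s
      simp only [IsLinearMap.mk'_apply, hf.map_smul, smul_eq_mul] at this
      exact this
    -- the weights can only charge points on which `f` is maximal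
    have hzero : ∀ y ∈ s, w y * (f y₀ - f y) = 0 := by
      refine (sum_eq_zero_iff_of_nonneg fun y hy =>
        mul_nonneg (hw0 y hy) (sub_nonneg.2 (hmax y hy))).1 ?_
      simp only [mul_sub, sum_sub_distrib, ← sum_mul, hw1, one_mul, ← hfsum, hfx, sub_self]
    have hsupp : ∀ y ∈ s, w y ≠ 0 → f y = f y₀ := fun y hy hw =>
      (sub_eq_zero.1 ((mul_eq_zero.1 (hzero y hy)).resolve_left hw)).symm
    refine Finset.mem_convexHull'.2 ⟨w, fun y hy => hw0 y (mem_filter.1 hy).1, ?_, ?_⟩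
    · rwa [sum_filter_of_ne hsupp]
    · exact sum_filter_of_ne fun y hy hwy => hsupp y hy fun hw => hwy (by rw [hw, zero_smul])
  · intro hx
    have hsub : convexHull ℝ (↑{y ∈ s | f y = f y₀} : Set E) ⊆ {x | f x = f y₀} :=
      convexHull_min (fun y hy => (mem_filter.1 hy).2) (convex_hyperplane hf _)
    exact ⟨convexHull_mono (coe_subset.2 (filter_subset _ _)) hx,
      fun y hy => (hle hy).trans_eq (hsub hx).symm⟩

lemma isEdgeOf_of_maximizers {c : Fin n → ℝ} {α β : Perm (Fin n)} (hαβ : α ≠ β)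
    (hmax : ∀ x, c ⬝ᵥ permVec x ≤ c ⬝ᵥ permVec α) (hβ : c ⬝ᵥ permVec β = c ⬝ᵥ permVec α)
    (hopt : ∀ x, c ⬝ᵥ permVec x = c ⬝ᵥ permVec α → x = α ∨ x = β) :
    IsEdgeOf (Permutohedron n) (permVec α) (permVec β) := by
  refine ⟨permVec_injective.ne hαβ, c, ?_⟩
  have hlin : IsLinearMap ℝ (c ⬝ᵥ ·) := ⟨dotProduct_add c, fun r x => dotProduct_smul r c x⟩
  have hfilter :
      {y ∈ univ.image permVec | c ⬝ᵥ y = c ⬝ᵥ permVec α} = {permVec α, permVec β} := by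
    ext y
    simp only [mem_filter, mem_image, mem_univ, true_and, mem_insert, mem_singleton]
    constructor
    · rintro ⟨⟨x, rfl⟩, hx⟩
      rcases hopt x hx with rfl | rfl <;> simp
    · rintro (rfl | rfl)
      exacts [⟨⟨α, rfl⟩, rfl⟩, ⟨⟨β, rfl⟩, hβ⟩]
  rw [permutohedron_eq_convexHull]
  change {x | x ∈ _ ∧ ∀ y ∈ _, c ⬝ᵥ y ≤ c ⬝ᵥ x} = _
  rw [setOf_isMaxOn_convexHull_eq hlin (mem_image_of_mem _ (mem_univ α)) (by simpa using hmax),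
    hfilter, coe_pair, convexHull_pair]

lemma Equiv.Perm.eq_or_eq_mul_swap_of_forall_ne {ι : Type*} [DecidableEq ι] {x σ : Perm ι}
    {a b : ι} (h : ∀ i, i ≠ a → i ≠ b → x i = σ i) : x = σ ∨ x = σ * swap a b := by
  have hab : ∀ c, c = a ∨ c = b → x c = σ a ∨ x c = σ b := by
    intro c hc
    by_contra! hne
    have hj : σ.symm (x c) ≠ a ∧ σ.symm (x c) ≠ b :=
      ⟨fun he => hne.1 (by rw [← he, apply_symm_apply]),
        fun he => hne.2 (by rw [← he, apply_symm_apply])⟩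
    have : x (σ.symm (x c)) = x c := by rw [h _ hj.1 hj.2, apply_symm_apply]
    rcases hc with rfl | rfl
    exacts [hj.1 (x.injective this), hj.2 (x.injective this)]
  rcases hab a (Or.inl rfl) with ha | ha
  · left
    ext i
    by_cases hia : i = a
    · rw [hia, ha]
    by_cases hib : i = b
    · subst hib
      rcases hab i (Or.inr rfl) with hb | hb
      · exact absurd (x.injective (hb.trans ha.symm)) hia
      · rw [hb]
    · rw [h i hia hib]
  · right
    ext i
    by_cases hia : i = a
    · subst hia
      simp [ha]
    by_cases hib : i = b
    · subst hib
      rcases hab i (Or.inr rfl) with hb | hb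
      · simp [hb]
      · exact absurd (x.injective (hb.trans ha.symm)) hia
    · simp [h i hia hib, swap_apply_of_ne_of_ne hia hib]

lemma isEdgeOf_mul_swap {α : Perm (Fin n)} {a b : Fin n} (hadj : (α b : ℕ) = α a + 1) :
    IsEdgeOf (Permutohedron n) (permVec α) (permVec (α * swap a b)) := by
  have hab : a ≠ b := by rintro rfl; omega
  have hval : ∀ i j, (α i : ℕ) = α j ↔ i = j := fun i j => by
    rw [Fin.val_inj, α.injective.eq_iff]
  -- lower the value at `b` onto that at `a`: the resulting weights tie only at `a` and `b`
  set c : Fin n → ℝ := fun i => ((if i = b then α a else α i : ℕ) : ℝ) with hc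
  have hMα : Monovary c (permVec α) := by
    intro i j hij
    rw [permVec_lt_permVec, Fin.lt_def] at hij
    simp only [hc, Nat.cast_le]
    have := (hval i b).not.2
    have := (hval j b).not.2
    split_ifs <;> subst_vars <;> omega
  have hcab : c a = c b := by simp [hc]
  have hdot : c ⬝ᵥ permVec (α * swap a b) = c ⬝ᵥ permVec α := by
    rw [dotProduct_permVec_mul_swap, hcab, sub_self, zero_mul, add_zero]
  refine isEdgeOf_of_maximizers (by simpa [swap_eq_one_iff] using hab)
    hMα.dotProduct_permVec_le hdot fun x hx => ?_
  have hMx := (hMα.monovary_permVec_iff x).2 hx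
  refine Equiv.Perm.eq_or_eq_mul_swap_of_forall_ne fun i hia hib => ?_
  refine hMx.apply_eq_of_permVec hMα fun j hji => ?_
  simp only [hc, Ne, Nat.cast_inj, if_neg hib]
  have := (hval j i).not.2 hji
  have := (hval i a).not.2 hia
  split_ifs <;> omega

lemma exists_mul_swap_of_isEdgeOf {α ξ : Perm (Fin n)}
    (h : IsEdgeOf (Permutohedron n) (permVec α) (permVec ξ)) :
    ∃ a b, ξ = α * swap a b ∧ (α b : ℕ) = α a + 1 := by
  obtain ⟨hne, c, hface⟩ := h
  have hface' := fun x => Set.ext_iff.1 hface x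
  have hαface := (hface' _).2 (left_mem_segment ℝ _ _)
  have hαmax : ∀ x, c ⬝ᵥ permVec x ≤ c ⬝ᵥ permVec α :=
    fun x => hαface.2 _ (permVec_mem_permutohedron x)
  have hξmax : ∀ x, c ⬝ᵥ permVec x ≤ c ⬝ᵥ permVec ξ :=
    fun x => ((hface' _).2 (right_mem_segment ℝ _ _)).2 _ (permVec_mem_permutohedron x)
  have hMα := monovary_of_forall_dotProduct_le hαmax
  have hopt : ∀ x, c ⬝ᵥ permVec x = c ⬝ᵥ permVec α → x = α ∨ x = ξ := fun x hx =>
    eq_or_eq_of_permVec_mem_segment ((hface' _).1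
      ⟨permVec_mem_permutohedron x, fun y hy => (hαface.2 y hy).trans_eq hx.symm⟩)
  -- without a tie in `c` the maximizer would be unique
  obtain ⟨a, b, hlt, hcab⟩ : ∃ a b, α a < α b ∧ c a = c b := by
    by_contra! hinj
    refine hne (congrArg permVec (Equiv.ext fun i => ?_))
    refine hMα.apply_eq_of_permVec (monovary_of_forall_dotProduct_le hξmax) fun j hji => ?_
    rcases lt_or_gt_of_ne (α.injective.ne hji) with h | h
    exacts [hinj j i h, (hinj i j h).symm]
  -- the position `d` holding the value just above `α a` ties with `a` as well
  have hsucc : (α a : ℕ) + 1 < n := lt_of_le_of_lt hlt (α b).isLt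
  set d := α.symm ⟨α a + 1, hsucc⟩
  have hd : (α d : ℕ) = α a + 1 := by simp [d]
  have hcad : c a = c d := by
    refine le_antisymm (hMα ((permVec_lt_permVec α).2 (Fin.lt_def.2 (by omega)))) ?_
    rcases (Fin.le_def.2 (hd ▸ hlt) : α d ≤ α b).lt_or_eq with hdb | hdb
    · exact hcab ▸ hMα ((permVec_lt_permVec α).2 hdb)
    · rw [α.injective hdb, hcab]
  refine ⟨a, d, ?_, hd⟩
  have hdot : c ⬝ᵥ permVec (α * swap a d) = c ⬝ᵥ permVec α := by
    rw [dotProduct_permVec_mul_swap, hcad, sub_self, zero_mul, add_zero]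
  rcases hopt _ hdot with h | h
  · rw [mul_eq_left, swap_eq_one_iff] at h
    simp [h] at hd
  · exact h.symm

theorem isEdgeOf_permVec_iff {α ξ : Perm (Fin n)} :
    IsEdgeOf (Permutohedron n) (permVec α) (permVec ξ) ↔
      ∃ a b, ξ = α * swap a b ∧ (α b : ℕ) = α a + 1 :=
  ⟨exists_mul_swap_of_isEdgeOf, by rintro ⟨a, b, rfl, h⟩; exact isEdgeOf_mul_swap h⟩

end Permutohedron

section MonotoneWalks

variable {n k : ℕ}

def firstBlock (n k : ℕ) : Fin n → ℝ := fun i => if (i : ℕ) < k then 1 else 0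

lemma sumFirst_eq_dotProduct (x : Fin n → ℝ) : sumFirst n k x = firstBlock n k ⬝ᵥ x := by
  simp [sumFirst, dotProduct, firstBlock, sum_filter]

lemma monovary_firstBlock_iff {γ : Perm (Fin n)} :
    Monovary (firstBlock n k) (permVec γ) ↔
      ∀ i j : Fin n, (i : ℕ) < k → k ≤ (j : ℕ) → γ j < γ i := by
  constructor
  · intro h i j hi hj
    by_contra! hle
    have := h ((permVec_lt_permVec γ).2 (hle.lt_of_ne (γ.injective.ne fun e => by omega)))
    norm_num [firstBlock, hi, hj.not_gt] at this
  · intro h i j hij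
    rw [permVec_lt_permVec] at hij
    simp only [firstBlock]
    split_ifs with hi hj <;> norm_num
    exact absurd hij (h i j hi (not_lt.1 hj)).not_gt

def IsMonotoneStep (k : ℕ) (γ γ' : Perm (Fin n)) (a b : Fin n) : Prop :=
  (a : ℕ) < k ∧ k ≤ (b : ℕ) ∧ (γ b : ℕ) = γ a + 1 ∧ γ' = γ * swap a b

lemma sumFirst_permVec_mul_swap {γ : Perm (Fin n)} {a b : Fin n} (hadj : (γ b : ℕ) = γ a + 1) :
    sumFirst n k (permVec (γ * swap a b)) =
      sumFirst n k (permVec γ) + (firstBlock n k a - firstBlock n k b) := by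
  rw [sumFirst_eq_dotProduct, sumFirst_eq_dotProduct, dotProduct_permVec_mul_swap]
  simp [permVec, hadj]

lemma exists_isMonotoneStep_of_isEdgeOf {γ γ' : Perm (Fin n)}
    (hedge : IsEdgeOf (Permutohedron n) (permVec γ) (permVec γ'))
    (hinc : sumFirst n k (permVec γ) < sumFirst n k (permVec γ')) :
    ∃ a b, IsMonotoneStep k γ γ' a b := by
  obtain ⟨a, b, rfl, hadj⟩ := isEdgeOf_permVec_iff.1 hedge
  rw [sumFirst_permVec_mul_swap hadj] at hinc
  simp only [firstBlock] at hinc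
  split_ifs at hinc with ha hb <;> norm_num at hinc
  exact ⟨a, b, ha, not_lt.1 hb, hadj, rfl⟩

namespace IsMonotoneStep

variable {γ γ' : Perm (Fin n)} {a b : Fin n}

lemma isEdgeOf (h : IsMonotoneStep k γ γ' a b) :
    IsEdgeOf (Permutohedron n) (permVec γ) (permVec γ') := by
  obtain ⟨-, -, hadj, rfl⟩ := h
  exact isEdgeOf_permVec_iff.2 ⟨a, b, rfl, hadj⟩

lemma sumFirst_eq (h : IsMonotoneStep k γ γ' a b) :
    sumFirst n k (permVec γ') = sumFirst n k (permVec γ) + 1 := by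
  obtain ⟨ha, hb, hadj, rfl⟩ := h
  simp [sumFirst_permVec_mul_swap hadj, firstBlock, ha, hb.not_gt]

lemma apply_of_lt (h : IsMonotoneStep k γ γ' a b) {i : Fin n} (hi : (i : ℕ) < k) :
    (γ' i : ℕ) = γ i + if i = a then 1 else 0 := by
  obtain ⟨-, hb, hadj, rfl⟩ := h
  have hib : i ≠ b := by rintro rfl; omega
  split_ifs with hia
  · simp [hia, hadj]
  · simp [swap_apply_of_ne_of_ne hia hib]

/-- Swapping two adjacent values changes the relative order of no other pair of positions. -/
lemma lt_iff (h : IsMonotoneStep k γ γ' a b) {i j : Fin n} (hij : (i : ℕ) < k ↔ (j : ℕ) < k) :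
    γ' i < γ' j ↔ γ i < γ j := by
  obtain ⟨ha, hb, hadj, rfl⟩ := h
  have hval : ∀ x y, (γ x : ℕ) = γ y ↔ x = y := fun x y => by rw [Fin.val_inj, γ.injective.eq_iff]
  simp only [Perm.mul_apply, Fin.lt_def, swap_apply_def]
  have := (hval i a).not
  have := (hval j a).not
  have := (hval i b).not
  have := (hval j b).not
  have := (hval i j).not
  split_ifs <;> subst_vars <;> omega

lemma left_unique {a' b' : Fin n} (h : IsMonotoneStep k γ γ' a b)
    (h' : IsMonotoneStep k γ γ' a' b') : a = a' := by
  by_contra hne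
  have h1 := h.apply_of_lt h.1
  have h2 := h'.apply_of_lt h.1
  simp only [if_true, if_neg hne, add_zero] at h1 h2
  omega

end IsMonotoneStep

def BlockSorted (k : ℕ) (γ : Perm (Fin n)) : Prop :=
  ∀ i j : Fin n, i < j → ((i : ℕ) < k ↔ (j : ℕ) < k) → γ i < γ j

def IsMonotoneWalk (k : ℕ) (γ : ℕ → Perm (Fin n)) (s : ℕ → Fin n) (M : ℕ) : Prop :=
  γ 0 = 1 ∧ ∀ t < M, ∃ b, IsMonotoneStep k (γ t) (γ (t + 1)) (s t) b

def stepCount (s : ℕ → Fin n) (q h : ℕ) : ℕ := Nat.count (fun t => (s t : ℕ) = q) h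

lemma stepCount_succ (s : ℕ → Fin n) (q h : ℕ) :
    stepCount s q (h + 1) = stepCount s q h + if (s h : ℕ) = q then 1 else 0 :=
  Nat.count_succ _ _

namespace IsMonotoneWalk

variable {γ : ℕ → Perm (Fin n)} {s : ℕ → Fin n} {M : ℕ}

lemma mono (hw : IsMonotoneWalk k γ s M) {h : ℕ} (hh : h ≤ M) : IsMonotoneWalk k γ s h :=
  ⟨hw.1, fun t ht => hw.2 t (by omega)⟩

lemma pos_lt (hw : IsMonotoneWalk k γ s M) {t : ℕ} (ht : t < M) : (s t : ℕ) < k := by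
  obtain ⟨b, hstep⟩ := hw.2 t ht
  exact hstep.1

lemma lt_of_pos (hw : IsMonotoneWalk k γ s M) (hM : 0 < M) : k < n := by
  obtain ⟨b, hstep⟩ := hw.2 0 hM
  exact lt_of_le_of_lt hstep.2.1 b.isLt

lemma apply_eq (hw : IsMonotoneWalk k γ s M) {q : Fin n} (hq : (q : ℕ) < k) :
    (γ M q : ℕ) = q + stepCount s q M := by
  induction M with
  | zero => simp [hw.1, stepCount]
  | succ M ih =>
    obtain ⟨b, hstep⟩ := hw.2 M (Nat.lt_succ_self M)
    rw [hstep.apply_of_lt hq, ih (hw.mono M.le_succ), stepCount_succ]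
    simp only [Fin.ext_iff, eq_comm (a := (q : ℕ))]
    ring

lemma blockSorted (hw : IsMonotoneWalk k γ s M) : BlockSorted k (γ M) := by
  induction M with
  | zero => simpa [hw.1, BlockSorted] using fun i j hij _ => hij
  | succ M ih =>
    obtain ⟨b, hstep⟩ := hw.2 M (Nat.lt_succ_self M)
    intro i j hij hblock
    rw [hstep.lt_iff hblock]
    exact ih (hw.mono M.le_succ) i j hij hblock

lemma sumFirst_eq (hw : IsMonotoneWalk k γ s M) :
    sumFirst n k (permVec (γ M)) = sumFirst n k (permVec 1) + M := by
  induction M with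
  | zero => simp [hw.1]
  | succ M ih =>
    obtain ⟨b, hstep⟩ := hw.2 M (Nat.lt_succ_self M)
    rw [hstep.sumFirst_eq, ih (hw.mono M.le_succ)]
    push_cast
    ring

/-- The first block of a walk stays increasing: this is the lattice condition on its positions. -/
lemma stepCount_le_stepCount_succ (hw : IsMonotoneWalk k γ s M) {q : ℕ} (hq : q + 1 < k) :
    stepCount s q M ≤ stepCount s (q + 1) M := by
  rcases M.eq_zero_or_pos with rfl | hM
  · simp [stepCount]
  have hkn := hw.lt_of_pos hM
  have hsorted := hw.blockSorted ⟨q, by omega⟩ ⟨q + 1, by omega⟩ (Fin.lt_def.2 (by simp))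
    (by simp only; omega)
  rw [Fin.lt_def, hw.apply_eq (by simp only; omega), hw.apply_eq (by simp only; omega)] at hsorted
  simp only at hsorted
  omega

end IsMonotoneWalk

/-- Reading the positions in the cyclic order `k, …, n - 1, 0, …, k - 1` gives increasing values,
so the values are `0, 1, …, n - 1` in that order. -/
lemma BlockSorted.apply_eq_of_separated {γ : Perm (Fin n)} (hγ : BlockSorted k γ)
    (hsep : ∀ i j : Fin n, (i : ℕ) < k → k ≤ (j : ℕ) → γ j < γ i) (i : Fin n) :
    (γ i : ℕ) = if (i : ℕ) < k then n - k + i else i - k := by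
  let rot : Fin n → Fin n := fun r =>
    if h : (r : ℕ) < n - k then ⟨r + k, by omega⟩ else ⟨r - (n - k), by omega⟩
  have hmono : StrictMono (γ ∘ rot) := by
    intro r r' hr
    rw [Fin.lt_def] at hr
    simp only [Function.comp_apply, rot]
    split_ifs with h h' h'
    · exact hγ _ _ (Fin.lt_def.2 (by simp only; omega)) (by simp only; omega)
    · exact hsep _ _ (by simp only; omega) (by simp only; omega)
    · omega
    · exact hγ _ _ (Fin.lt_def.2 (by simp only; omega)) (by simp only; omega)
  set r : Fin n := ⟨if (i : ℕ) < k then n - k + i else i - k, by split_ifs <;> omega⟩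
  have hrot : rot r = i := by
    ext
    simp only [rot, r]
    split_ifs <;> simp only <;> omega
  have hid := congrFun hmono.eq_id r
  rw [Function.comp_apply, hrot] at hid
  rw [hid, id]

lemma separated_of_apply_eq {γ : Perm (Fin n)}
    (hγ : ∀ i : Fin n, (i : ℕ) < k → (γ i : ℕ) = n - k + i) :
    ∀ i j : Fin n, (i : ℕ) < k → k ≤ (j : ℕ) → γ j < γ i := by
  intro i j hi hj
  by_contra! hle
  rw [Fin.le_def, hγ i hi] at hle
  have hq : (γ j : ℕ) - (n - k) < k := by have := (γ j).isLt; omega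
  have := hγ ⟨γ j - (n - k), by omega⟩ hq
  have hj' : (⟨γ j - (n - k), by omega⟩ : Fin n) = j :=
    γ.injective (Fin.ext (by simp only at this; omega))
  rw [← hj'] at hj
  simp only at hj
  omega

lemma sumFirst_permVec_eq_add {γ : Perm (Fin n)}
    (hγ : ∀ i : Fin n, (i : ℕ) < k → (γ i : ℕ) = n - k + i) :
    sumFirst n k (permVec γ) = sumFirst n k (permVec 1) + ((k * (n - k) : ℕ) : ℝ) := by
  have hcard : min n k * (n - k) = k * (n - k) := by
    rcases le_total k n with h | h
    · rw [min_eq_right h]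
    · rw [Nat.sub_eq_zero_of_le h, mul_zero, mul_zero]
  simp only [sumFirst, permVec]
  rw [← hcard, ← Fin.card_filter_val_lt, Nat.cast_mul, ← nsmul_eq_mul, ← sum_const,
    ← sum_add_distrib]
  refine sum_congr rfl fun i hi => ?_
  rw [hγ i (mem_filter.1 hi).2, Perm.one_apply]
  push_cast
  ring

section

variable [NeZero n]

-- `γ a + 1` wraps around in `Fin n`; it is only used when `γ a + 1 < n`
def raise (γ : Perm (Fin n)) (a : Fin n) : Perm (Fin n) := γ * swap a (γ.symm (γ a + 1))

lemma IsMonotoneStep.eq_raise {γ γ' : Perm (Fin n)} {a b : Fin n}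
    (h : IsMonotoneStep k γ γ' a b) : γ' = raise γ a := by
  obtain ⟨-, -, hadj, rfl⟩ := h
  have hb : γ.symm (γ a + 1) = b := by
    rw [γ.symm_apply_eq, Fin.ext_iff, Fin.val_add_one_of_lt' (hadj ▸ (γ b).isLt), hadj]
  rw [raise, hb]

lemma isMonotoneStep_raise_of_blockSorted {γ : Perm (Fin n)} {a : Fin n} (ha : (a : ℕ) < k)
    (hγ : BlockSorted k γ) (hlt : (γ a : ℕ) + 1 < n)
    (hnext : ∀ a₁ : Fin n, (a₁ : ℕ) = a + 1 → (a₁ : ℕ) < k → (γ a : ℕ) + 1 < γ a₁) :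
    IsMonotoneStep k γ (raise γ a) a (γ.symm (γ a + 1)) := by
  set b := γ.symm (γ a + 1)
  have hb : (γ b : ℕ) = γ a + 1 := by simp [b, Fin.val_add_one_of_lt' hlt]
  refine ⟨ha, ?_, hb, rfl⟩
  by_contra! hbk
  rcases lt_trichotomy (b : ℕ) a with hba | hba | hba
  · have := hγ b a (Fin.lt_def.2 hba) (iff_of_true hbk ha)
    rw [Fin.lt_def] at this
    omega
  · rw [Fin.ext hba] at hb
    omega
  · have hle : γ ⟨a + 1, by omega⟩ ≤ γ b := by
      rcases (show a + 1 ≤ (b : ℕ) by omega).lt_or_eq with h₁ | h₁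
      · exact (hγ _ b (Fin.lt_def.2 h₁) (iff_of_true (by simp only; omega) hbk)).le
      · rw [show (⟨a + 1, _⟩ : Fin n) = b from Fin.ext h₁]
    have := hnext ⟨a + 1, by omega⟩ rfl (by simp only; omega)
    rw [Fin.le_def] at hle
    omega

def walk (s : ℕ → Fin n) : ℕ → Perm (Fin n)
  | 0 => 1
  | t + 1 => raise (walk s t) (s t)

lemma walk_congr {s s' : ℕ → Fin n} {h : ℕ} (hs : ∀ t < h, s t = s' t) :
    walk s h = walk s' h := by
  induction h with
  | zero => rfl
  | succ h ih => rw [walk, walk, ih fun t ht => hs t (by omega), hs h (Nat.lt_succ_self h)]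

lemma IsMonotoneWalk.eq_walk {γ : ℕ → Perm (Fin n)} {s : ℕ → Fin n} {M : ℕ}
    (hw : IsMonotoneWalk k γ s M) : γ M = walk s M := by
  induction M with
  | zero => exact hw.1
  | succ M ih =>
    obtain ⟨b, hstep⟩ := hw.2 M (Nat.lt_succ_self M)
    rw [hstep.eq_raise, ih (hw.mono M.le_succ), walk]

end

end MonotoneWalks


section Words

variable {n k : ℕ}

lemma card_filter_val_lt_and_eq_count {K : ℕ} (P : ℕ → Prop) [DecidablePred P] (h : ℕ) :
    #{t : Fin K | (t : ℕ) < h ∧ P t} = Nat.count P (min h K) := by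
  rw [Nat.count_eq_card_filter_range]
  refine card_bij (fun t _ => (t : ℕ)) (fun t ht => ?_) (fun _ _ _ _ h => Fin.ext h) fun x hx => ?_
  · simp only [mem_filter, mem_univ, true_and, mem_range] at ht ⊢
    exact ⟨lt_min ht.1 t.isLt, ht.2⟩
  · simp only [mem_filter, mem_range, lt_min_iff] at hx
    exact ⟨⟨x, hx.1.2⟩, by simpa using ⟨hx.1.1, hx.2⟩, rfl⟩

/-- Letter `i` of a lattice word stands for position `k - 1 - i` of the first block. -/
lemma card_filter_eq_stepCount {K : ℕ} (a : Fin K → Fin k) (s : ℕ → Fin n)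
    (has : ∀ t : Fin K, (s t : ℕ) = k - 1 - a t) (h : ℕ) {i : ℕ} (hi : i < k) :
    #{t : Fin K | (t : ℕ) < h ∧ (a t : ℕ) = i} = stepCount s (k - 1 - i) (min h K) := by
  rw [stepCount, ← card_filter_val_lt_and_eq_count]
  refine congrArg card (filter_congr fun t _ => and_congr_right fun _ => ?_)
  have := (a t).isLt
  rw [has]
  omega

end Words

@[ext]
lemma LatticePerm.ext {k m : ℕ} {L L' : LatticePerm k m} (h : L.a = L'.a) : L = L' := by
  cases L
  cases L'
  cases h
  rfl

@[ext]
lemma MonotonePathPerm.ext {n k : ℕ} {p q : MonotonePathPerm n k} (hM : p.M = q.M)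
    (hσ : p.σ = q.σ) : p = q := by
  cases p
  cases q
  cases hM
  cases hσ
  rfl

namespace MonotonePathPerm

section

variable {n k : ℕ} (p : MonotonePathPerm n k)

lemma isPermVertex (h : ℕ) : IsPermVertex n (p.σ h) := by
  rcases le_total h p.M with hh | hh
  · exact p.vert h hh
  · exact p.tail h hh ▸ p.vert p.M le_rfl

noncomputable def perm (h : ℕ) : Perm (Fin n) := (isPermVertex_iff.1 (p.isPermVertex h)).choose

lemma permVec_perm (h : ℕ) : permVec (p.perm h) = p.σ h :=
  (isPermVertex_iff.1 (p.isPermVertex h)).choose_spec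

lemma perm_zero : p.perm 0 = 1 :=
  permVec_injective (by rw [permVec_perm, p.start]; rfl)

lemma exists_isMonotoneStep {h : ℕ} (hh : h < p.M) :
    ∃ a b, IsMonotoneStep k (p.perm h) (p.perm (h + 1)) a b :=
  exists_isMonotoneStep_of_isEdgeOf (by simpa only [permVec_perm] using p.edge h hh)
    (by simpa only [permVec_perm] using p.inc h hh)

end

variable {n k : ℕ} [NeZero n] (p : MonotonePathPerm n k)

-- junk value `0` once `p.M ≤ h`
noncomputable def pos (h : ℕ) : Fin n :=
  if hh : h < p.M then (p.exists_isMonotoneStep hh).choose else 0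

lemma isMonotoneWalk : IsMonotoneWalk k p.perm p.pos p.M := by
  refine ⟨p.perm_zero, fun t ht => ?_⟩
  rw [pos, dif_pos ht]
  exact (p.exists_isMonotoneStep ht).choose_spec

lemma perm_M_apply (i : Fin n) :
    (p.perm p.M i : ℕ) = if (i : ℕ) < k then n - k + i else i - k := by
  refine p.isMonotoneWalk.blockSorted.apply_eq_of_separated (monovary_firstBlock_iff.1 ?_) i
  refine monovary_of_forall_dotProduct_le fun x => ?_
  rw [← sumFirst_eq_dotProduct, ← sumFirst_eq_dotProduct, permVec_perm]
  exact p.max' _ (isPermVertex_iff.2 ⟨x, rfl⟩)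

lemma M_eq : p.M = k * (n - k) := by
  have h := p.isMonotoneWalk.sumFirst_eq
  rw [sumFirst_permVec_eq_add fun i hi => by rw [p.perm_M_apply, if_pos hi]] at h
  exact_mod_cast (add_left_cancel h).symm

lemma σ_M_eq : p.σ p.M = fun i : Fin n =>
    if (i : ℕ) < k then ((n - k + (i : ℕ) + 1 : ℕ) : ℝ) else (((i : ℕ) - k + 1 : ℕ) : ℝ) := by
  ext i
  rw [← permVec_perm, permVec, p.perm_M_apply]
  split_ifs <;> push_cast <;> rfl

lemma stepCount_pos_end {q : ℕ} (hq : q < k) : stepCount p.pos q p.M = n - k := by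
  rcases p.M.eq_zero_or_pos with hM | hM
  · have hK := p.M_eq
    rw [hM, eq_comm, Nat.mul_eq_zero] at hK
    simp only [hM, stepCount, Nat.count_zero]
    omega
  have hkn := p.isMonotoneWalk.lt_of_pos hM
  have := p.isMonotoneWalk.apply_eq (q := ⟨q, by omega⟩) hq
  rw [p.perm_M_apply, if_pos hq] at this
  simp only at this
  omega

lemma pos_lt (t : Fin (k * (n - k))) : (p.pos t : ℕ) < k :=
  p.isMonotoneWalk.pos_lt (by rw [p.M_eq]; exact t.isLt)

noncomputable def word (t : Fin (k * (n - k))) : Fin k :=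
  ⟨k - 1 - p.pos t, by have := p.pos_lt t; omega⟩

lemma pos_eq_word (t : Fin (k * (n - k))) : (p.pos t : ℕ) = k - 1 - p.word t := by
  have := p.pos_lt t
  simp only [word]
  omega

noncomputable def toLatticePerm : LatticePerm k (n - k) where
  a := p.word
  count j := by
    have := card_filter_eq_stepCount _ _ p.pos_eq_word (k * (n - k)) j.isLt
    have hcount : stepCount p.pos (k - 1 - j) (k * (n - k)) = n - k := by
      rw [← p.M_eq]
      exact p.stepCount_pos_end (by omega)
    rw [min_self, hcount] at this
    refine Eq.trans (congrArg card ?_) this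
    exact filter_congr fun t _ => by simp [Fin.ext_iff, t.isLt]
  prefix' h i hi := by
    rw [card_filter_eq_stepCount _ _ p.pos_eq_word h hi,
      card_filter_eq_stepCount _ _ p.pos_eq_word h (by omega), ← p.M_eq]
    have := (p.isMonotoneWalk.mono (min_le_right h p.M)).stepCount_le_stepCount_succ
      (q := k - 1 - (i + 1)) (by omega)
    rwa [show k - 1 - (i + 1) + 1 = k - 1 - i by omega] at this

end MonotonePathPerm

namespace LatticePerm

variable {n k : ℕ} [NeZero n] (L : LatticePerm k (n - k))

def pos (t : ℕ) : Fin n :=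
  if ht : t < k * (n - k) then
    ⟨k - 1 - L.a ⟨t, ht⟩, by
      have := Nat.pos_of_mul_pos_left (lt_of_le_of_lt (Nat.zero_le t) ht)
      omega⟩
  else 0

lemma pos_eq (t : Fin (k * (n - k))) : (L.pos t : ℕ) = k - 1 - L.a t := by
  simp [pos, t.isLt]

lemma stepCount_pos_end {q : ℕ} (hq : q < k) : stepCount L.pos q (k * (n - k)) = n - k := by
  have := card_filter_eq_stepCount _ _ L.pos_eq (k * (n - k)) (i := k - 1 - q) (by omega)
  rw [min_self, show k - 1 - (k - 1 - q) = q by omega] at this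
  rw [← this]
  exact (congrArg card (filter_congr fun t _ => by simp [Fin.ext_iff, t.isLt])).trans
    (L.count ⟨k - 1 - q, by omega⟩)

lemma stepCount_pos_le_succ {h : ℕ} (hh : h ≤ k * (n - k)) {q : ℕ} (hq : q + 1 < k) :
    stepCount L.pos q h ≤ stepCount L.pos (q + 1) h := by
  have := L.prefix' h (k - 2 - q) (by omega)
  rwa [card_filter_eq_stepCount _ _ L.pos_eq h (by omega),
    card_filter_eq_stepCount _ _ L.pos_eq h (by omega), min_eq_left hh,
    show k - 1 - (k - 2 - q + 1) = q by omega, show k - 1 - (k - 2 - q) = q + 1 by omega] at this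

lemma exists_isMonotoneStep_walk {h : ℕ} (hw : IsMonotoneWalk k (walk L.pos) L.pos h)
    (hh : h < k * (n - k)) :
    ∃ b, IsMonotoneStep k (walk L.pos h) (walk L.pos (h + 1)) (L.pos h) b := by
  have ha : (L.pos h : ℕ) < k := by
    have := L.pos_eq ⟨h, hh⟩
    have := (L.a ⟨h, hh⟩).isLt
    simp only at *
    omega
  have hγa := hw.apply_eq ha
  have hcount : stepCount L.pos (L.pos h) (h + 1) ≤ n - k :=
    L.stepCount_pos_end ha ▸ Nat.count_monotone _ hh
  rw [stepCount_succ, if_pos rfl] at hcount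
  refine ⟨_, isMonotoneStep_raise_of_blockSorted ha hw.blockSorted (by omega)
    fun a₁ ha₁ ha₁k => ?_⟩
  have hlattice := L.stepCount_pos_le_succ hh (q := L.pos h) (by omega)
  rw [stepCount_succ, stepCount_succ, if_pos rfl, if_neg (by omega), ← ha₁] at hlattice
  have := hw.apply_eq ha₁k
  omega

lemma isMonotoneWalk_walk_pos : IsMonotoneWalk k (walk L.pos) L.pos (k * (n - k)) := by
  suffices ∀ h ≤ k * (n - k), IsMonotoneWalk k (walk L.pos) L.pos h from this _ le_rfl
  intro h
  induction h with
  | zero => exact fun _ => ⟨rfl, fun t ht => absurd ht (Nat.not_lt_zero t)⟩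
  | succ h ih =>
    intro hh
    have hw := ih (by omega)
    refine ⟨hw.1, fun t ht => ?_⟩
    rcases Nat.lt_succ_iff_lt_or_eq.1 ht with ht | rfl
    · exact hw.2 t ht
    · exact L.exists_isMonotoneStep_walk hw hh

lemma walk_pos_end_apply {i : Fin n} (hi : (i : ℕ) < k) :
    (walk L.pos (k * (n - k)) i : ℕ) = n - k + i := by
  rw [L.isMonotoneWalk_walk_pos.apply_eq hi, L.stepCount_pos_end hi, add_comm]

noncomputable def toPath : MonotonePathPerm n k where
  M := k * (n - k)
  σ h := permVec (walk L.pos (min h (k * (n - k))))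
  start := by simp only [Nat.zero_min, walk]; rfl
  vert _ _ := isPermVertex_iff.2 ⟨_, rfl⟩
  edge h hh := by
    obtain ⟨b, hstep⟩ := L.isMonotoneWalk_walk_pos.2 h hh
    rw [min_eq_left hh.le, min_eq_left hh]
    exact hstep.isEdgeOf
  inc h hh := by
    obtain ⟨b, hstep⟩ := L.isMonotoneWalk_walk_pos.2 h hh
    rw [min_eq_left hh.le, min_eq_left hh, hstep.sumFirst_eq]
    exact lt_add_one _
  max' x hx := by
    obtain ⟨ξ, rfl⟩ := isPermVertex_iff.1 hx
    rw [min_self, sumFirst_eq_dotProduct, sumFirst_eq_dotProduct]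
    exact (monovary_firstBlock_iff.2 (separated_of_apply_eq fun i hi =>
      L.walk_pos_end_apply hi)).dotProduct_permVec_le ξ
  tail h hh := by rw [min_eq_right hh, min_self]

lemma toPath_perm {h : ℕ} (hh : h ≤ k * (n - k)) : L.toPath.perm h = walk L.pos h :=
  permVec_injective (by rw [MonotonePathPerm.permVec_perm]; simp [toPath, min_eq_left hh])

lemma toPath_pos {t : ℕ} (ht : t < k * (n - k)) : L.toPath.pos t = L.pos t := by
  obtain ⟨b, hstep⟩ := L.toPath.isMonotoneWalk.2 t ht
  obtain ⟨b', hstep'⟩ := L.isMonotoneWalk_walk_pos.2 t ht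
  rw [L.toPath_perm ht.le, L.toPath_perm ht] at hstep
  exact hstep.left_unique hstep'

lemma toLatticePerm_toPath : L.toPath.toLatticePerm = L := by
  refine LatticePerm.ext (funext fun t => Fin.ext ?_)
  have := L.toPath.pos_eq_word t
  rw [L.toPath_pos t.isLt, L.pos_eq] at this
  have := (L.a t).isLt
  have := (L.toPath.word t).isLt
  change (L.toPath.word t : ℕ) = L.a t
  omega

end LatticePerm

lemma MonotonePathPerm.toPath_toLatticePerm {n k : ℕ} [NeZero n] (p : MonotonePathPerm n k) :
    p.toLatticePerm.toPath = p := by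
  have hpos : ∀ t < k * (n - k), p.toLatticePerm.pos t = p.pos t := fun t ht => by
    have h₁ := p.toLatticePerm.pos_eq ⟨t, ht⟩
    have h₂ := p.pos_eq_word ⟨t, ht⟩
    have := p.pos_lt ⟨t, ht⟩
    change _ = k - 1 - (p.word ⟨t, ht⟩ : ℕ) at h₁
    exact Fin.ext (by simp only at *; omega)
  ext1
  · exact p.M_eq.symm
  · funext h
    change permVec (walk _ (min h (k * (n - k)))) = p.σ h
    rw [walk_congr fun t ht => hpos t (lt_of_lt_of_le ht (min_le_right _ _)), ← p.M_eq,
      ← (p.isMonotoneWalk.mono (min_le_right h p.M)).eq_walk, permVec_perm]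
    rcases le_total h p.M with hh | hh
    · rw [min_eq_left hh]
    · rw [min_eq_right hh, p.tail h hh]

theorem monotone_paths_lattice_perm_bijection_general
    (n k : ℕ) (hkn : k < n) :
    Nonempty (MonotonePathPerm n k ≃ LatticePerm k (n - k)) ∧
    ∀ p : MonotonePathPerm n k,
      p.M = k * (n - k) ∧
      p.σ p.M = fun i : Fin n =>
        if (i : ℕ) < k then ((n - k + (i : ℕ) + 1 : ℕ) : ℝ)
        else (((i : ℕ) - k + 1 : ℕ) : ℝ) := by
  have : NeZero n := ⟨by omega⟩
  exact ⟨⟨⟨MonotonePathPerm.toLatticePerm, LatticePerm.toPath,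
    MonotonePathPerm.toPath_toLatticePerm, LatticePerm.toLatticePerm_toPath⟩⟩,
    fun p => ⟨p.M_eq, p.σ_M_eq⟩⟩

/-- for `1 ≤ k < n`, the `𝟙_{[k]}`-monotone paths on `Π_{n−1}`
starting at the identity are in bijection with `k × (n−k)` rectangular lattice
permutations; every such path has length `k(n−k)` and ends at the permutation
`(n−k+1,…,n,1,…,n−k)`. -/
theorem monotone_paths_lattice_perm_bijection
    (n k : ℕ) (hk : 1 ≤ k) (hkn : k < n) :
    Nonempty (MonotonePathPerm n k ≃ LatticePerm k (n - k)) ∧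
    ∀ p : MonotonePathPerm n k,
      p.M = k * (n - k) ∧
      p.σ p.M = fun i : Fin n =>
        if (i : ℕ) < k then ((n - k + (i : ℕ) + 1 : ℕ) : ℝ)
        else (((i : ℕ) - k + 1 : ℕ) : ℝ) :=
  monotone_paths_lattice_perm_bijection_general n k hkn
end

section
/- Every standard Young tableau of rectangular shape 2 × n is realizable: for every SYT T of shape 2 × n there exist real numbers u₁ < u₂ and v₁ < v₂ < ⋯ < v_n such that all sums u_i + v_j are distinct and the rank of u_i + v_j among all these 2n sums (ranked from smallest = 1 to largest = 2n) equals the entry of T in position (i,j). -/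
/-!
Read the tableau column by column as a family of intervals `[T 0 j, T 1 j]` in `ℕ`: both endpoint
sequences increase and all endpoints are distinct. The claim is that such a family is
order-equivalent to a family of unit intervals `[v j, v j + 1]`, for then `u = (0, 1)` and `v` give
an outer sum matrix ordered exactly like `T`. The unit intervals are built column by column: the
new left endpoint must lie above the previous left endpoints, above the right endpoints of the
intervals that end before it starts, and below the right endpoints of those that are still open.
These finitely many lower bounds lie below the upper bounds because the smaller family already
has the right order type, so a point between them exists.
-/

open Finset

lemma Function.Injective.of_lt_iff_lt {ι β γ : Type*} [LinearOrder β] [LinearOrder γ]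
    {f : ι → β} {g : ι → γ} (hf : Function.Injective f) (h : ∀ p q, g p < g q ↔ f p < f q) :
    Function.Injective g := fun p q hpq =>
  hf (le_antisymm (not_lt.1 fun hlt => ((h q p).2 hlt).ne' hpq)
    (not_lt.1 fun hlt => ((h p q).2 hlt).ne hpq))

lemma card_filter_le_apply_of_injective {ι : Type*} [Fintype ι] {f : ι → ℕ}
    (hf : Function.Injective f) (hmem : ∀ p, f p ∈ Icc 1 (Fintype.card ι)) (q : ι) :
    #{p | f p ≤ f q} = f q := by
  have himage : univ.image f = Icc 1 (Fintype.card ι) :=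
    eq_of_subset_of_card_le (by simpa [Finset.subset_iff] using hmem)
      (by simp [card_image_of_injective _ hf])
  calc #{p | f p ≤ f q} = #((univ.image f).filter (· ≤ f q)) := by
        rw [filter_image, card_image_of_injective _ hf]
    _ = #(Icc 1 (f q)) := by
        have := mem_Icc.1 (hmem q)
        rw [himage]
        congr 1
        ext m
        simp only [mem_filter, mem_Icc]
        omega
    _ = f q := Nat.card_Icc 1 (f q)

lemma Fin.strictMono_snoc {β : Type*} [Preorder β] {n : ℕ} {y : Fin n → β} {t : β}
    (hy : StrictMono y) (ht : ∀ k, y k < t) : StrictMono (Fin.snoc (α := fun _ => β) y t) := by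
  intro i j hij
  induction j using Fin.lastCases with
  | last =>
    induction i using Fin.lastCases with
    | last => exact absurd hij (lt_irrefl _)
    | cast i => simpa using ht i
  | cast j =>
    induction i using Fin.lastCases with
    | last => exact absurd hij (not_lt.2 (Fin.castSucc_lt_last j).le)
    | cast i => simpa using hy (Fin.castSucc_lt_castSucc_iff.1 hij)

section UnitIntervalModel

variable {α : Type*} [LinearOrder α]

def IsUnitIntervalModel {n : ℕ} (a b : Fin n → α) (x : Fin n → ℝ) : Prop :=
  StrictMono x ∧ ∀ i j, (x i + 1 < x j ↔ b i < a j) ∧ (x j < x i + 1 ↔ a j < b i)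

lemma IsUnitIntervalModel.exists_snoc_point {n : ℕ} {a b : Fin (n + 1) → α}
    (ha : StrictMono a) (hb : StrictMono b) (hne : ∀ i j, a i ≠ b j) {y : Fin n → ℝ}
    (hy : IsUnitIntervalModel (a ∘ Fin.castSucc) (b ∘ Fin.castSucc) y) :
    ∃ t, ∀ k, y k < t ∧ (y k + 1 < t ↔ b k.castSucc < a (Fin.last n)) ∧
      (t < y k + 1 ↔ a (Fin.last n) < b k.castSucc) := by
  set P : Finset (Fin n) := {k | b k.castSucc < a (Fin.last n)}
  set Q : Finset (Fin n) := {k | a (Fin.last n) < b k.castSucc}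
  have hP : ∀ k, k ∈ P ↔ b k.castSucc < a (Fin.last n) := by simp [P]
  have hQ : ∀ k, k ∈ Q ↔ a (Fin.last n) < b k.castSucc := by simp [Q]
  obtain ⟨t, hlow, hup⟩ := exists_between' (univ.image y ∪ P.image (y · + 1))
    (Q.image (y · + 1)) (by
      simp only [mem_union, mem_image, mem_univ, true_and]
      rintro _ (⟨k, rfl⟩ | ⟨k, hk, rfl⟩) _ ⟨m, hm, rfl⟩
      · exact ((hy.2 m k).2).2 ((ha (Fin.castSucc_lt_last k)).trans ((hQ m).1 hm))
      · have : b k.castSucc < b m.castSucc := ((hP k).1 hk).trans ((hQ m).1 hm)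
        simpa using hy.1 (Fin.castSucc_lt_castSucc_iff.1 (hb.lt_iff_lt.1 this)))
  have hlow' : ∀ k ∈ P, y k + 1 < t := fun k hk =>
    hlow _ (mem_union_right _ (mem_image_of_mem _ hk))
  have hup' : ∀ k ∈ Q, t < y k + 1 := fun k hk => hup _ (mem_image_of_mem _ hk)
  refine ⟨t, fun k => ⟨hlow _ (by simp), ⟨fun h => ?_, fun h => hlow' k ((hP k).2 h)⟩,
    ⟨fun h => ?_, fun h => hup' k ((hQ k).2 h)⟩⟩⟩
  · refine (lt_or_gt_of_ne (hne (Fin.last n) k.castSucc).symm).resolve_right fun h' => ?_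
    exact lt_asymm h (hup' k ((hQ k).2 h'))
  · refine (lt_or_gt_of_ne (hne (Fin.last n) k.castSucc)).resolve_right fun h' => ?_
    exact lt_asymm h (hlow' k ((hP k).2 h'))

theorem exists_isUnitIntervalModel : ∀ {n : ℕ} (a b : Fin n → α), StrictMono a → StrictMono b →
    (∀ j, a j < b j) → (∀ i j, a i ≠ b j) → ∃ x, IsUnitIntervalModel a b x
  | 0, _, _, _, _, _, _ => ⟨Fin.elim0, fun i => i.elim0, fun i => i.elim0⟩
  | n + 1, a, b, ha, hb, hab, hne => by
    obtain ⟨y, hy⟩ := exists_isUnitIntervalModel (a ∘ Fin.castSucc) (b ∘ Fin.castSucc)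
      (ha.comp Fin.strictMono_castSucc) (hb.comp Fin.strictMono_castSucc)
      (fun j => hab _) (fun i j => hne _ _)
    obtain ⟨t, ht⟩ := hy.exists_snoc_point ha hb hne
    have hab_last : ∀ j, a j < b (Fin.last n) := fun j =>
      (hab j).trans_le (hb.monotone (Fin.le_last j))
    refine ⟨Fin.snoc y t, Fin.strictMono_snoc hy.1 fun k => (ht k).1, fun i j => ?_⟩
    induction i using Fin.lastCases with
    | last =>
      induction j using Fin.lastCases with
      | last =>
        simp only [Fin.snoc_last]
        exact ⟨iff_of_false (by linarith) (hab_last _).not_gt, iff_of_true (by linarith) (hab _)⟩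
      | cast j =>
        have := (ht j).1
        simp only [Fin.snoc_last, Fin.snoc_castSucc]
        exact ⟨iff_of_false (by linarith) (hab_last _).not_gt, iff_of_true (by linarith) (hab_last _)⟩
    | cast i =>
      induction j using Fin.lastCases with
      | last => simpa using (ht i).2
      | cast j => simpa using hy.2 i j

lemma IsUnitIntervalModel.outerSum_lt_iff {n : ℕ} {T : Fin 2 → Fin n → α} {x : Fin n → ℝ}
    (h0 : StrictMono (T 0)) (h1 : StrictMono (T 1)) (hx : IsUnitIntervalModel (T 0) (T 1) x)
    (p q : Fin 2 × Fin n) :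
    ![0, 1] p.1 + x p.2 < ![0, 1] q.1 + x q.2 ↔ T p.1 p.2 < T q.1 q.2 := by
  obtain ⟨i, k⟩ := p
  obtain ⟨j, l⟩ := q
  fin_cases i <;> fin_cases j <;> simp only [Fin.zero_eta, Fin.mk_one, Matrix.cons_val_zero,
    Matrix.cons_val_one, zero_add]
  · exact hx.1.lt_iff_lt.trans h0.lt_iff_lt.symm
  · rw [add_comm]; exact (hx.2 l k).2
  · rw [add_comm]; exact (hx.2 k l).1
  · rw [add_lt_add_iff_left]; exact hx.1.lt_iff_lt.trans h1.lt_iff_lt.symm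

end UnitIntervalModel

/-- every standard Young tableau of shape `2 × n` is realizable:
there are `u₁ < u₂` and `v₁ < ⋯ < v_n` with all sums `u_i + v_j` distinct such
that the rank of `u_i + v_j` among all `2n` sums equals `T i j`. -/
theorem two_row_SYT_realizable
    (n : ℕ) (T : Fin 2 → Fin n → ℕ)
    (hmem : ∀ i j, T i j ∈ Finset.Icc 1 (2 * n))
    (hinj : Function.Injective (fun p : Fin 2 × Fin n => T p.1 p.2))
    (hrow : ∀ i, StrictMono (T i))
    (hcol : ∀ j, T 0 j < T 1 j) :
    ∃ (u : Fin 2 → ℝ) (v : Fin n → ℝ),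
      StrictMono u ∧ StrictMono v ∧
      Function.Injective (fun p : Fin 2 × Fin n => u p.1 + v p.2) ∧
      ∀ i j, T i j =
        (Finset.univ.filter
          (fun p : Fin 2 × Fin n => u p.1 + v p.2 ≤ u i + v j)).card := by
  have hne : ∀ i j, T 0 i ≠ T 1 j := fun i j h => by
    simpa using hinj (a₁ := (0, i)) (a₂ := (1, j)) h
  obtain ⟨v, hv⟩ := exists_isUnitIntervalModel (T 0) (T 1) (hrow 0) (hrow 1) hcol hne
  have horder := hv.outerSum_lt_iff (hrow 0) (hrow 1)
  refine ⟨![0, 1], v, by simp [Fin.strictMono_iff_lt_succ], hv.1, hinj.of_lt_iff_lt horder,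
    fun i j => ?_⟩
  have hrank : ∀ p : Fin 2 × Fin n,
      ![(0 : ℝ), 1] p.1 + v p.2 ≤ ![0, 1] i + v j ↔ T p.1 p.2 ≤ T i j := fun p => by
    simpa only [not_lt] using (horder (i, j) p).not
  rw [filter_congr fun p _ => hrank p]
  have hmem' : ∀ p : Fin 2 × Fin n, T p.1 p.2 ∈ Icc 1 (Fintype.card (Fin 2 × Fin n)) := fun p => by
    simpa only [Fintype.card_prod, Fintype.card_fin] using hmem p.1 p.2
  exact (card_filter_le_apply_of_injective hinj hmem' (i, j)).symm
end
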